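/- arXiv:1606.06161 — 2 statements merged into one kernel-verified Lean document; each statement's English description precedes it below -/
import Mathlib

section
/- Let H be a complex Hilbert space, λ ∈ (0,1), and T ∈ B(H) such that both T and T* are injective. If Δ_λ(T²) = T, then T² = T*. -/
open scoped NNReal InnerProductSpace ComplexConjugate

noncomputable section

variable {H : Type*} [NormedAddCommGroup H] [InnerProductSpace ℂ H] [CompleteSpace H]

/-- The modulus `|T| = (T*T)^{1/2}` of a bounded operator. -/
def opAbs (T : H →L[ℂ] H) : H →L[ℂ] H := CFC.sqrt (star T * T)

/-- `V` is the partial isometry appearing in the polar decomposition `T = V|T|`,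
i.e. `V V* V = V`, `ker V = ker T` and `T = V|T|`. -/
def IsPolarPartialIsom (T V : H →L[ℂ] H) : Prop :=
  V * star V * V = V ∧ LinearMap.ker (V : H →ₗ[ℂ] H) = LinearMap.ker (T : H →ₗ[ℂ] H) ∧ T = V * opAbs T

open Classical in
/-- The partial isometry of the polar decomposition of `T` (it exists and is unique). -/
def polarIsom (T : H →L[ℂ] H) : H →L[ℂ] H :=
  if h : ∃ V, IsPolarPartialIsom T V then h.choose else 0

/-- The `λ`-Aluthge transform `Δ_λ(T) = |T|^λ V |T|^(1-λ)`. -/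
def aluthge (l : ℝ) (T : H →L[ℂ] H) : H →L[ℂ] H :=
  CFC.rpow (opAbs T) l * polarIsom T * CFC.rpow (opAbs T) (1 - l)

/-- The Jordan product `A ∘ B = (AB + BA)/2`. -/
def jordan (A B : H →L[ℂ] H) : H →L[ℂ] H := (2⁻¹ : ℂ) • (A * B + B * A)

/-- The rank-one operator `x ⊗ y : u ↦ ⟨u, y⟩ x` (the inner product being linear
in its first slot, as in the paper). -/
def rankOne (x y : H) : H →L[ℂ] H := (innerSL ℂ y).smulRight x

/-- A quasi-normal operator: `T` commutes with `T*T`. -/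
def IsQuasinormal (T : H →L[ℂ] H) : Prop := T * (star T * T) = (star T * T) * T

end

section Aux

variable {H : Type*} [NormedAddCommGroup H] [InnerProductSpace ℂ H] [CompleteSpace H]

private lemma cancel_right {X Y Z : H →L[ℂ] H} (hX : IsSelfAdjoint X)
    (hinj : Function.Injective ⇑X) (hYZ : Y * X = Z * X) : Y = Z := by
  have horth : (LinearMap.range (X : H →ₗ[ℂ] H))ᗮ = ⊥ := by
    rw [Submodule.eq_bot_iff]
    intro y hy
    have key : ∀ u : H, ⟪u, X y⟫_ℂ = 0 := by
      intro u
      have h4 : ⟪X u, y⟫_ℂ = 0 :=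
        (Submodule.mem_orthogonal _ y).mp hy (X u) (LinearMap.mem_range.mpr ⟨u, rfl⟩)
      calc ⟪u, X y⟫_ℂ = ⟪X u, y⟫_ℂ := by
            conv_lhs => rw [← hX.adjoint_eq]
            exact ContinuousLinearMap.adjoint_inner_right X u y
        _ = 0 := h4
    have hXy : X y = 0 := inner_self_eq_zero.mp (key (X y))
    exact hinj (by rw [hXy, map_zero])
  have hdense : Dense (LinearMap.range (X : H →ₗ[ℂ] H) : Set H) :=
    Submodule.dense_iff_topologicalClosure_eq_top.mpr
      (Submodule.topologicalClosure_eq_top_iff.mpr horth)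
  have hsub : (LinearMap.range (X : H →ₗ[ℂ] H) : Set H) ⊆ {v | Y v = Z v} := by
    rintro _ ⟨u, rfl⟩
    have := congrArg (fun W : H →L[ℂ] H => W u) hYZ
    simpa [ContinuousLinearMap.mul_apply] using this
  have hclosed : IsClosed {v : H | Y v = Z v} := isClosed_eq Y.continuous Z.continuous
  ext v
  exact closure_minimal hsub hclosed (hdense v)

private lemma rpow_mul_rpow (a : H →L[ℂ] H) (ha : 0 ≤ a) {s t : ℝ}
    (hs : 0 < s) (ht : 0 < t) (hst : s + t = 1) :
    CFC.rpow a s * CFC.rpow a t = a := by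
  lift s to ℝ≥0 using hs.le with s'
  lift t to ℝ≥0 using ht.le with t'
  have hs' : 0 < s' := by exact_mod_cast hs
  have ht' : 0 < t' := by exact_mod_cast ht
  have hst' : s' + t' = 1 := by exact_mod_cast hst
  calc CFC.rpow a (s' : ℝ) * CFC.rpow a (t' : ℝ)
      = a ^ s' * a ^ t' := by rw [CFC.nnrpow_eq_rpow hs', CFC.nnrpow_eq_rpow ht']; rfl
    _ = a ^ (s' + t') := (CFC.nnrpow_add hs' ht').symm
    _ = a := by rw [hst', CFC.nnrpow_one a ha]

end Aux

variable {H K : Type*} [NormedAddCommGroup H] [InnerProductSpace ℂ H] [CompleteSpace H]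
  [NormedAddCommGroup K] [InnerProductSpace ℂ K] [CompleteSpace K]

set_option maxHeartbeats 2000000 in
set_option synthInstance.maxHeartbeats 400000 in
theorem sq_eq_adjoint_of_aluthge_sq_eq_self (l : ℝ) (hl : l ∈ Set.Ioo (0 : ℝ) 1)
    (T : H →L[ℂ] H) (hT : Function.Injective T)
    (hT' : Function.Injective (star T : H →L[ℂ] H))
    (h : aluthge l (T * T) = T) : T * T = star T := by
  rcases subsingleton_or_nontrivial H with hs | hnt
  · ext x; exact Subsingleton.elim _ _
  obtain ⟨hl0, hl1⟩ := hl
  have hl1' : 0 < 1 - l := by linarith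
  set S : H →L[ℂ] H := T * T with hS
  clear_value S
  -- injectivity facts
  have kerToInj : ∀ (X : H →L[ℂ] H), (∀ z, X z = 0 → z = 0) → Function.Injective ⇑X := by
    intro X hX a b hab
    have h1 : X (a - b) = 0 := by rw [map_sub, hab, sub_self]
    exact sub_eq_zero.mp (hX _ h1)
  have hSinj : Function.Injective ⇑S := by
    intro a b hab
    have : T (T a) = T (T b) := by
      simpa only [hS, ContinuousLinearMap.mul_apply] using hab
    exact hT (hT this)
  have hSker : ∀ z, S z = 0 → z = 0 := fun z hz => hSinj (by rw [hz, map_zero])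
  have hS'inj : Function.Injective ⇑(star S) := by
    intro a b hab
    have : (star T) ((star T) a) = (star T) ((star T) b) := by
      simpa only [hS, star_mul, ContinuousLinearMap.mul_apply] using hab
    exact hT' (hT' this)
  have hS'ker : ∀ z, (star S) z = 0 → z = 0 := fun z hz => hS'inj (by rw [hz, map_zero])
  -- polar decomposition exists
  have hex : ∃ V, IsPolarPartialIsom S V := by
    by_contra hne
    have hp0 : polarIsom S = 0 := dif_neg hne
    rw [aluthge, hp0, mul_zero, zero_mul] at h
    obtain ⟨x, hx⟩ := exists_ne (0 : H)
    exact hx (hT (by rw [← h]; simp))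
  have hVspec : IsPolarPartialIsom S (polarIsom S) := by
    rw [polarIsom, dif_pos hex]
    exact hex.choose_spec
  rw [aluthge] at h
  set V : H →L[ℂ] H := polarIsom S with hVdef
  clear_value V
  obtain ⟨hV1, -, hV3⟩ := hVspec
  set A : H →L[ℂ] H := opAbs S with hAdef
  clear_value A
  -- h : CFC.rpow A l * V * CFC.rpow A (1 - l) = T
  have hA0 : (0 : H →L[ℂ] H) ≤ A := by
    rw [hAdef, opAbs]; exact CFC.sqrt_nonneg _
  have hAsa : IsSelfAdjoint A := .of_nonneg hA0
  have hA2 : A * A = star S * S := by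
    rw [hAdef, opAbs]
    exact CFC.sqrt_mul_sqrt_self _ (star_mul_self_nonneg S)
  have hAker : ∀ z, A z = 0 → z = 0 := by
    intro z hz
    have h1 : (star S * S) z = 0 := by
      rw [← hA2, ContinuousLinearMap.mul_apply, hz, map_zero]
    have h2 : ⟪S z, S z⟫_ℂ = 0 := by
      rw [← ContinuousLinearMap.adjoint_inner_right S z (S z),
        ← ContinuousLinearMap.star_eq_adjoint]
      have h3 : (star S) (S z) = 0 := by
        rw [← ContinuousLinearMap.mul_apply]; exact h1
      rw [h3, inner_zero_right]
    exact hSker z (inner_self_eq_zero.mp h2)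
  set P : H →L[ℂ] H := CFC.rpow A l with hPdef
  clear_value P
  set Q : H →L[ℂ] H := CFC.rpow A (1 - l) with hQdef
  clear_value Q
  have hPQ : P * Q = A := by
    rw [hPdef, hQdef]; exact rpow_mul_rpow A hA0 hl0 hl1' (by ring)
  have hQP : Q * P = A := by
    rw [hPdef, hQdef]; exact rpow_mul_rpow A hA0 hl1' hl0 (by ring)
  have hP0 : (0 : H →L[ℂ] H) ≤ P := by rw [hPdef]; exact CFC.rpow_nonneg
  have hQ0 : (0 : H →L[ℂ] H) ≤ Q := by rw [hQdef]; exact CFC.rpow_nonneg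
  have hPsa : IsSelfAdjoint P := .of_nonneg hP0
  have hQsa : IsSelfAdjoint Q := .of_nonneg hQ0
  have hPker : ∀ z, P z = 0 → z = 0 := by
    intro z hz
    apply hAker
    rw [← hQP, ContinuousLinearMap.mul_apply, hz, map_zero]
  have hQker : ∀ z, Q z = 0 → z = 0 := by
    intro z hz
    apply hAker
    rw [← hPQ, ContinuousLinearMap.mul_apply, hz, map_zero]
  have hPinj : Function.Injective ⇑P := kerToInj _ hPker
  have hQinj : Function.Injective ⇑Q := kerToInj _ hQker
  -- V is a coisometry
  have hstarS : star S = A * star V := by rw [hV3, star_mul, hAsa.star_eq]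
  have hVsker : ∀ z, (star V) z = 0 → z = 0 := by
    intro z hz
    apply hS'ker
    rw [hstarS, ContinuousLinearMap.mul_apply, hz, map_zero]
  have hqker : ∀ z, (V * star V) z = 0 → z = 0 := by
    intro z hz
    apply hVsker z
    have h3 : ⟪V ((star V) z), z⟫_ℂ = 0 := by
      rw [← ContinuousLinearMap.mul_apply, hz, inner_zero_left]
    have h2 : ⟪(star V) z, (star V) z⟫_ℂ = 0 := by
      calc ⟪(star V) z, (star V) z⟫_ℂ = ⟪V ((star V) z), z⟫_ℂ := by
            rw [ContinuousLinearMap.star_eq_adjoint]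
            exact ContinuousLinearMap.adjoint_inner_right V _ z
        _ = 0 := h3
    exact inner_self_eq_zero.mp h2
  have hq2 : (V * star V) * (V * star V) = V * star V := by
    calc (V * star V) * (V * star V) = (V * star V * V) * star V := by
          simp only [mul_assoc]
      _ = V * star V := by rw [hV1]
  have hVV : V * star V = 1 := by
    ext z
    rw [ContinuousLinearMap.one_apply]
    have h0 : (V * star V) ((V * star V) z - z) = 0 := by
      rw [map_sub, ← ContinuousLinearMap.mul_apply, hq2, sub_self]
    exact sub_eq_zero.mp (hqker _ h0)
  -- key algebraic identities
  have hTP : T * P = P * S := by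
    rw [← h, hV3]
    simp only [mul_assoc]
    rw [hQP]
  have hE : P * (V * (A * V)) = V * P := by
    apply cancel_right hQsa hQinj
    have hQPe : Q * (P * (V * Q)) = A * (V * Q) := by rw [← mul_assoc, hQP]
    calc (P * (V * (A * V))) * Q = S := by
          rw [hS, ← h]
          simp only [mul_assoc]
          rw [hQPe]
      _ = (V * P) * Q := by rw [hV3, ← hPQ, mul_assoc]
  have hPS : P * S = (V * P) * star V := by
    calc P * S = P * (V * (A * V)) * star V := by
          rw [hV3]
          simp only [mul_assoc, hVV, mul_one]
      _ = (V * P) * star V := by rw [hE]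
  have hsa : star (P * S) = P * S := by
    rw [hPS, star_mul, star_mul, star_star, hPsa.star_eq]
    simp only [mul_assoc]
  have hheart : star S * P = P * S := by
    calc star S * P = star S * star P := by rw [hPsa.star_eq]
      _ = star (P * S) := (star_mul P S).symm
      _ = P * S := hsa
  have hchain : S * P = star S * (star S * P) := by
    calc S * P = (T * T) * P := by rw [hS]
      _ = T * (T * P) := by rw [mul_assoc]
      _ = T * (P * S) := by rw [hTP]
      _ = (T * P) * S := by rw [mul_assoc]
      _ = (P * S) * S := by rw [hTP]
      _ = (star S * P) * S := by rw [← hheart]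
      _ = star S * (P * S) := by rw [mul_assoc]
      _ = star S * (star S * P) := by rw [← hheart]
  have hM1 : S = star S * star S := by
    apply cancel_right hPsa hPinj
    calc S * P = star S * (star S * P) := hchain
      _ = (star S * star S) * P := by rw [mul_assoc]
  have hM2 : star S = S * S := by
    have h5 := congrArg star hM1
    rwa [star_mul, star_star] at h5
  have hS4 : S * (S * (S * S)) = S := by
    conv_rhs => rw [hM1, hM2]
    simp only [mul_assoc]
  have hS3 : S * (S * S) = 1 := by
    ext z
    rw [ContinuousLinearMap.one_apply]
    apply hSinj
    calc S ((S * (S * S)) z) = (S * (S * (S * S))) z :=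
          (ContinuousLinearMap.mul_apply _ _ _).symm
      _ = S z := by rw [hS4]
  have hSS1 : star S * S = 1 := by
    calc star S * S = S * (S * S) := by rw [hM2, mul_assoc]
      _ = 1 := hS3
  have hA1 : A = 1 := by
    rw [hAdef, opAbs, hSS1]
    exact CFC.sqrt_one
  have hP1 : P = 1 := by rw [hPdef, hA1]; exact CFC.one_rpow
  have hQ1 : Q = 1 := by rw [hQdef, hA1]; exact CFC.one_rpow
  have hTV : T = V := by rw [← h, hP1, hQ1, one_mul, mul_one]
  have hSV : S = V := by rw [hV3, hA1, mul_one]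
  have hTS : T = S := by rw [hTV, hSV]
  have hSS : S * S = S := by
    conv_lhs => rw [← hTS]
    exact hS.symm
  show S = star T
  rw [hTS, hM2, hSS]
end

section
/- Let H be a complex Hilbert space, λ ∈ (0,1), and T ∈ B(H) such that both T and T* are injective. Then Δ_λ(T²) = T if and only if T = I. -/
open scoped NNReal InnerProductSpace ComplexConjugate

set_option synthInstance.maxHeartbeats 1000000
set_option maxHeartbeats 2000000

section AluthgeAux

variable {H : Type*} [NormedAddCommGroup H] [InnerProductSpace ℂ H] [CompleteSpace H]

private lemma aux_inj_of_ker {F : H →L[ℂ] H} (h : ∀ z, F z = 0 → z = 0) :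
    Function.Injective F := fun x y hxy =>
  sub_eq_zero.mp (h _ (by rw [map_sub, hxy, sub_self]))

private lemma aux_cancel_right {C Z W : H →L[ℂ] H} (hC : IsSelfAdjoint C)
    (hinj : Function.Injective C) (h : Z * C = W * C) : Z = W := by
  have h2 : C * star Z = C * star W := by
    calc C * star Z = star (Z * C) := by rw [star_mul, hC.star_eq]
    _ = star (W * C) := by rw [h]
    _ = C * star W := by rw [star_mul, hC.star_eq]
  have h3 : star Z = star W := by
    ext x
    exact hinj (by simpa using congrArg (fun (U : H →L[ℂ] H) => U x) h2)
  exact star_injective h3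

private lemma aux_cancel_left {V Z W : H →L[ℂ] H} (hinj : Function.Injective V)
    (h : V * Z = V * W) : Z = W := by
  ext x
  exact hinj (by simpa using congrArg (fun (U : H →L[ℂ] H) => U x) h)

private lemma aux_idem_inj_eq_one {P : H →L[ℂ] H} (hidem : P * P = P)
    (hinj : Function.Injective P) : P = 1 := by
  ext x
  have := congrArg (fun (U : H →L[ℂ] H) => U x) hidem
  simpa using hinj (by simpa using this)

private lemma aux_commute_cfc_real {a b : H →L[ℂ] H} (ha : IsSelfAdjoint a) (h : Commute b a)
    (f : ℝ → ℝ) : Commute b (cfc f a) := by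
  by_cases hf : ContinuousOn f (spectrum ℝ a)
  · rw [cfc_apply f a ha hf]
    suffices hS : ∀ g : C(spectrum ℝ a, ℝ), Commute b (cfcHom ha g) from hS _
    intro g
    let ψ := cfcHom (R := ℝ) ha
    let S : Subalgebra ℝ C(spectrum ℝ a, ℝ) :=
      (Subalgebra.centralizer ℝ {b}).comap (ψ : C(spectrum ℝ a, ℝ) →⋆ₐ[ℝ] H →L[ℂ] H).toAlgHom
    have hSset : (S : Set C(spectrum ℝ a, ℝ)) = ψ ⁻¹' {x | b * x = x * b} := by
      ext g
      simp only [S, Subalgebra.mem_comap, Subalgebra.mem_centralizer_iff, Set.mem_singleton_iff]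
      constructor
      · intro hg; exact hg b rfl
      · rintro hg c rfl; exact hg
    have hclosed : IsClosed (S : Set C(spectrum ℝ a, ℝ)) := by
      rw [hSset]
      exact (isClosed_eq (continuous_mul_left b) (continuous_mul_right b)).preimage
        (cfcHom_isClosedEmbedding ha).continuous
    have htop : (⊤ : Subalgebra ℝ C(spectrum ℝ a, ℝ)) ≤ S := by
      rw [← polynomialFunctions.topologicalClosure (spectrum ℝ a)]
      refine Subalgebra.topologicalClosure_minimal ?_ hclosed
      rw [polynomialFunctions.eq_adjoin_X]
      refine Algebra.adjoin_le ?_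
      rintro x ⟨rfl⟩
      have hid : ψ (Polynomial.toContinuousMapOnAlgHom (spectrum ℝ a) Polynomial.X) = a := by
        rw [Polynomial.toContinuousMapOnAlgHom_apply,
          Polynomial.toContinuousMapOn_X_eq_restrict_id]
        exact cfcHom_id ha
      simp only [S, Subalgebra.mem_comap, Subalgebra.mem_centralizer_iff, Set.mem_singleton_iff]
      rintro c rfl
      show c * ψ _ = ψ _ * c
      rw [hid]
      exact h
    have hg : g ∈ S := htop (by trivial)
    have h2 := (hSset ▸ (SetLike.mem_coe.mpr hg) : _)
    exact (by simpa using h2 : b * ψ g = ψ g * b)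
  · rw [cfc_apply_of_not_continuousOn a hf]
    exact Commute.zero_right b

private lemma aux_commute_cfc_nnreal {a b : H →L[ℂ] H} (ha : (0 : H →L[ℂ] H) ≤ a)
    (h : Commute b a) (f : ℝ≥0 → ℝ≥0) : Commute b (cfc f a) := by
  rw [cfc_nnreal_eq_real f a ha]
  exact aux_commute_cfc_real (IsSelfAdjoint.of_nonneg ha) h _

private lemma aux_rpow_mul_rpow {a : H →L[ℂ] H} {s t : ℝ} (hs : 0 < s) (ht : 0 < t) :
    CFC.rpow a s * CFC.rpow a t = CFC.rpow a (s + t) := by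
  rw [CFC.rpow, CFC.rpow, CFC.rpow,
    ← cfc_mul _ _ a (NNReal.continuous_rpow_const hs.le).continuousOn
      (NNReal.continuous_rpow_const ht.le).continuousOn]
  exact cfc_congr fun x _ => (NNReal.rpow_add' (by positivity) x).symm

end AluthgeAux

variable {H K : Type*} [NormedAddCommGroup H] [InnerProductSpace ℂ H] [CompleteSpace H]
  [NormedAddCommGroup K] [InnerProductSpace ℂ K] [CompleteSpace K]

theorem aluthge_sq_eq_self_iff_eq_one (l : ℝ) (hl : l ∈ Set.Ioo (0 : ℝ) 1)
    (T : H →L[ℂ] H) (hT : Function.Injective T)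
    (hT' : Function.Injective (star T : H →L[ℂ] H)) :
    aluthge l (T * T) = T ↔ T = 1 := by
  obtain ⟨hl0, hl1⟩ := hl
  constructor
  · intro h
    by_cases hE : ∃ V, IsPolarPartialIsom (T * T) V
    · -- the main case
      rw [aluthge] at h
      set A : H →L[ℂ] H := opAbs (T * T) with hAdef
      set V : H →L[ℂ] H := polarIsom (T * T) with hVdef
      set X : H →L[ℂ] H := CFC.rpow A l with hXdef
      set Y : H →L[ℂ] H := CFC.rpow A (1 - l) with hYdef
      have hpi : V = hE.choose := by rw [hVdef]; unfold polarIsom; rw [dif_pos hE]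
      obtain ⟨hVVV, hker, hVA⟩ := hE.choose_spec
      rw [← hpi] at hVVV hker hVA
      rw [← hAdef] at hVA
      -- injectivity of T*T and star (T*T)
      have hSinj : Function.Injective (T * T) := by
        refine aux_inj_of_ker fun z hz => ?_
        have h1 : T (T z) = 0 := by simpa [ContinuousLinearMap.mul_apply] using hz
        have h2 : T z = 0 := hT (by simpa using h1)
        exact hT (by simpa using h2)
      have hS'inj : Function.Injective (star (T * T) : H →L[ℂ] H) := by
        refine aux_inj_of_ker fun z hz => ?_
        rw [star_mul] at hz
        have h1 : star T (star T z) = 0 := by simpa [ContinuousLinearMap.mul_apply] using hz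
        have h2 : star T z = 0 := hT' (by simpa using h1)
        exact hT' (by simpa using h2)
      -- facts about A
      have hA0 : (0 : H →L[ℂ] H) ≤ A := CFC.sqrt_nonneg _
      have hAsa : IsSelfAdjoint A := .of_nonneg hA0
      have hAA : A * A = star (T * T) * (T * T) :=
        CFC.sqrt_mul_sqrt_self _ (star_mul_self_nonneg _)
      have hAinj : Function.Injective A := by
        refine aux_inj_of_ker fun z hz => ?_
        have h1 : (A * A) z = 0 := by simp [ContinuousLinearMap.mul_apply, hz]
        rw [hAA] at h1
        have h2 : star (T * T) ((T * T) z) = 0 := by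
          simpa [ContinuousLinearMap.mul_apply] using h1
        have h3 : (T * T) z = 0 := hS'inj (by simpa using h2)
        exact hSinj (by simpa using h3)
      -- facts about X and Y
      have hXY : X * Y = A := by
        rw [hXdef, hYdef, aux_rpow_mul_rpow hl0 (by linarith), show l + (1 - l) = 1 by ring]
        exact CFC.rpow_one _ hA0
      have hYX : Y * X = A := by
        rw [hXdef, hYdef, aux_rpow_mul_rpow (by linarith) hl0, show (1 - l) + l = 1 by ring]
        exact CFC.rpow_one _ hA0
      have hX0 : (0 : H →L[ℂ] H) ≤ X := CFC.rpow_nonneg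
      have hY0 : (0 : H →L[ℂ] H) ≤ Y := CFC.rpow_nonneg
      have hXsa : IsSelfAdjoint X := .of_nonneg hX0
      have hYsa : IsSelfAdjoint Y := .of_nonneg hY0
      have hXinj : Function.Injective X := by
        refine aux_inj_of_ker fun z hz => ?_
        have h1 : A z = 0 := by rw [← hYX]; simp [ContinuousLinearMap.mul_apply, hz]
        exact hAinj (by simpa using h1)
      have hYinj : Function.Injective Y := by
        refine aux_inj_of_ker fun z hz => ?_
        have h1 : A z = 0 := by rw [← hXY]; simp [ContinuousLinearMap.mul_apply, hz]
        exact hAinj (by simpa using h1)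
      -- V is unitary
      have hVinj : Function.Injective V := by
        refine aux_inj_of_ker fun z hz => ?_
        have h1 : z ∈ LinearMap.ker (V : H →ₗ[ℂ] H) := LinearMap.mem_ker.mpr hz
        rw [hker] at h1
        exact hSinj (by simpa using LinearMap.mem_ker.mp h1)
      have hP : star V * V = 1 := by
        refine aux_idem_inj_eq_one ?_ ?_
        · calc star V * V * (star V * V) = star V * (V * star V * V) := by
                simp only [mul_assoc]
          _ = star V * V := by rw [hVVV]
        · refine aux_inj_of_ker fun z hz => ?_
          have h1 : V ((star V * V) z) = V z := by
            have := congrArg (fun (U : H →L[ℂ] H) => U z) hVVV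
            simpa [ContinuousLinearMap.mul_apply] using this
          rw [hz, map_zero] at h1
          exact hVinj (by simpa using h1.symm)
      have hVVVs : star V * V * star V = star V := by
        have := congrArg star hVVV
        simpa [star_mul, mul_assoc] using this
      have hQ : V * star V = 1 := by
        refine aux_idem_inj_eq_one ?_ ?_
        · calc V * star V * (V * star V) = V * (star V * V * star V) := by
                simp only [mul_assoc]
          _ = V * star V := by rw [hVVVs]
        · refine aux_inj_of_ker fun z hz => ?_
          have h1 : star V ((V * star V) z) = star V z := by
            have := congrArg (fun (U : H →L[ℂ] H) => U z) hVVVs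
            simpa [ContinuousLinearMap.mul_apply, mul_assoc] using this
          rw [hz, map_zero] at h1
          have h2 : star V z = 0 := h1.symm
          have h3 : star (T * T) z = 0 := by
            have : star (T * T) = A * star V := by
              rw [hVA, star_mul, hAsa.star_eq]
            rw [this]
            simp [ContinuousLinearMap.mul_apply, h2]
          exact hS'inj (by simpa using h3)
      -- main computation
      have hTT : X * V * Y * (X * V * Y) = V * A := by rw [h]; exact hVA
      have h1 : X * (V * (A * (V * Y))) = V * A := by
        have h1' := hTT
        simp only [mul_assoc] at h1'
        rw [show Y * (X * (V * Y)) = A * (V * Y) by rw [← mul_assoc, hYX]] at h1'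
        exact h1'
      have h9 : X * (V * (A * V)) = V * X := by
        refine aux_cancel_right hYsa hYinj ?_
        simp only [mul_assoc]
        rw [hXY]
        exact h1
      have h10 : star V * (X * (V * (A * V))) = X := by
        rw [h9, ← mul_assoc, hP, one_mul]
      have hDA : star V * (X * (V * A)) = X * star V := by
        have h' := congrArg (· * star V) h10
        simp only [mul_assoc] at h'
        rw [hQ, mul_one] at h'
        exact h'
      have h15 : A * (star V * (X * V)) = V * X := by
        have h'' := congrArg star hDA
        simp only [star_mul, star_star, hAsa.star_eq, hXsa.star_eq, mul_assoc] at h''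
        exact h''
      set E : H →L[ℂ] H := A * X with hEdef
      have hXA : X * A = A * X := by
        conv_lhs => rw [← hYX]
        rw [← mul_assoc, hXY]
      have hEsa : IsSelfAdjoint E := by
        rw [hEdef]
        show star (A * X) = A * X
        rw [star_mul, hAsa.star_eq, hXsa.star_eq, hXA]
      have hEinj : Function.Injective E := by
        refine aux_inj_of_ker fun z hz => ?_
        have h1' : A (X z) = 0 := hz
        exact hXinj (by simpa using hAinj (by simpa using h1'))
      have h19 : V * (V * E) = V * (E * star V) := by
        have w1 : V * (A * (star V * (X * (V * A)))) = V * (E * star V) := by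
          rw [hDA, hEdef]
          simp only [mul_assoc]
        have w2 : V * (A * (star V * (X * (V * A)))) = V * (V * E) := by
          have w := congrArg (fun Z => V * (Z * A)) h15
          simp only [mul_assoc] at w
          rw [hXA] at w
          rw [hEdef]
          exact w
        exact w2.symm.trans w1
      have h19' : E * (star V * star V) = V * (E * star V) := by
        have w := congrArg star h19
        simp only [star_mul, star_star, hEsa.star_eq, mul_assoc] at w
        exact w
      have h20a : V * (V * (E * (E * (star V * star V)))) = V * (E * (E * star V)) := by
        calc V * (V * (E * (E * (star V * star V))))
            = (V * (V * E)) * (E * (star V * star V)) := by simp only [mul_assoc]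
        _ = (V * (E * star V)) * (V * (E * star V)) := by rw [h19, h19']
        _ = V * (E * (star V * (V * (E * star V)))) := by simp only [mul_assoc]
        _ = V * (E * (E * star V)) := by rw [← mul_assoc (star V) V, hP, one_mul]
      have h20b : V * (E * (E * (star V * star V))) = E * (E * star V) :=
        aux_cancel_left hVinj h20a
      have h20c : V * (E * (E * star V)) = E * E := by
        have w := congrArg (· * V) h20b
        simp only [mul_assoc] at w
        simp only [hP, mul_one] at w
        exact w
      have hC2 : V * (E * E) = E * E * V := by
        have w := congrArg (· * V) h20c
        simp only [mul_assoc] at w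
        simp only [hP, mul_one] at w
        rw [mul_assoc]
        exact w
      -- V commutes with A, X, Y, E
      have hEpow : E = CFC.rpow A (1 + l) := by
        have w : CFC.rpow A 1 * CFC.rpow A l = CFC.rpow A (1 + l) :=
          aux_rpow_mul_rpow one_pos hl0
        rw [show CFC.rpow A 1 = A from CFC.rpow_one _ hA0] at w
        rw [hEdef, hXdef]
        exact w
      have hEE : E * E = CFC.rpow A (2 + 2 * l) := by
        rw [hEpow, aux_rpow_mul_rpow (by linarith) (by linarith),
          show (1 + l) + (1 + l) = 2 + 2 * l by ring]
      have h2l : (0 : ℝ) < 2 + 2 * l := by linarith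
      have h0EE : (0 : H →L[ℂ] H) ≤ E * E := by rw [hEE]; exact CFC.rpow_nonneg
      have hAeq : cfc (fun x : ℝ≥0 => x ^ (1 / (2 + 2 * l) : ℝ)) (E * E) = A := by
        have w := CFC.rpow_rpow_of_exponent_nonneg A (2 + 2 * l) (1 / (2 + 2 * l))
          h2l.le (by positivity) hA0
        rw [mul_one_div_cancel h2l.ne'] at w
        have w2 : CFC.rpow (CFC.rpow A (2 + 2 * l)) (1 / (2 + 2 * l)) = CFC.rpow A 1 := w
        rw [hEE]
        exact w2.trans (CFC.rpow_one _ hA0)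
      have hCVA : Commute V A := by
        have hc : Commute V (E * E) := hC2
        have w := aux_commute_cfc_nnreal h0EE hc (fun x : ℝ≥0 => x ^ (1 / (2 + 2 * l) : ℝ))
        rwa [hAeq] at w
      have hCVX : Commute V X := by
        have w := aux_commute_cfc_nnreal hA0 hCVA (fun x : ℝ≥0 => x ^ (l : ℝ))
        rwa [show cfc (fun x : ℝ≥0 => x ^ (l : ℝ)) A = X from rfl] at w
      have hCVE : Commute V E := by rw [hEdef]; exact hCVA.mul_right hCVX
      -- V * V = 1
      have hV2 : V * V = 1 := by
        refine aux_cancel_right hEsa hEinj ?_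
        rw [one_mul, mul_assoc, h19, ← mul_assoc, hCVE.eq, mul_assoc, hQ, mul_one]
      -- A = V
      have hfin : A * A = V * A := by
        calc A * A = A * (X * Y) := by rw [hXY]
        _ = X * (A * Y) := by rw [← mul_assoc, ← hXA, mul_assoc]
        _ = X * (V * V * (A * Y)) := by rw [hV2, one_mul]
        _ = X * (V * (A * (V * Y))) := by
              congr 1
              rw [mul_assoc]
              congr 1
              rw [← mul_assoc, hCVA.eq, mul_assoc]
        _ = V * A := h1
      have hAV : A = V := aux_cancel_right hAsa hAinj hfin
      have hA1 : A = 1 := by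
        have hA2 : A * A = 1 := by rw [hAV]; exact hV2
        have w := CFC.sqrt_mul_self A hA0
        rw [hA2, CFC.sqrt_one] at w
        exact w.symm
      rw [← h, ← hAV, hA1, mul_one, hXY, hA1]
    · have hT0 : T = 0 := by
        rw [← h, aluthge, polarIsom, dif_neg hE, mul_zero, zero_mul]
      have hzero : ∀ x : H, x = 0 := fun x => hT (by rw [hT0]; simp)
      ext x
      rw [hzero x]
      simp
  · rintro rfl
    have h1 : (1 : H →L[ℂ] H) * 1 = 1 := mul_one 1
    rw [h1]
    have hs1 : opAbs (1 : H →L[ℂ] H) = 1 := by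
      rw [opAbs, star_one, mul_one, CFC.sqrt_one]
    have hEx : IsPolarPartialIsom (1 : H →L[ℂ] H) 1 :=
      ⟨by simp, rfl, by rw [hs1, mul_one]⟩
    have hE : ∃ V, IsPolarPartialIsom (1 : H →L[ℂ] H) V := ⟨1, hEx⟩
    have hch : hE.choose = 1 := by
      have := hE.choose_spec.2.2
      rw [hs1, mul_one] at this
      exact this.symm
    have hpi : polarIsom (1 : H →L[ℂ] H) = 1 := by rw [polarIsom, dif_pos hE, hch]
    rw [aluthge, hs1, hpi, mul_one, aux_rpow_mul_rpow hl0 (by linarith)]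
    have h01 : (0 : H →L[ℂ] H) ≤ 1 := by simpa using star_mul_self_nonneg (1 : H →L[ℂ] H)
    rw [show l + (1 - l) = 1 by ring]
    exact CFC.rpow_one _ h01
end
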